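/- arXiv:1603.08234 — 2 statements merged into one kernel-verified Lean document; each statement's English description precedes it below -/
import Mathlib

section
/- Let φ, ψ: [0,t] → ℝ be C^∞ functions such that for some constants A, Ā, C, C̄ > 0 their derivatives satisfy |φ^{(n)}(s)| ≤ C̄·Ā^n·n^n and |ψ^{(n)}(s)| ≤ C·A^n·n^n for all s ∈ [0,t] and n ∈ ℕ₀. If φ^{(n)}(0) = ψ^{(n)}(0) for all n ∈ ℕ₀, then φ(s) = ψ(s) for all s ∈ [0,t]. -/
open Set Filter

private lemma dc_aux_restrict {f : ℝ → ℝ} {a c t : ℝ} (hca : c ≤ a) (hat : a < t)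
    (hf : ContDiffOn ℝ (⊤ : ℕ∞) f (Set.Icc c t)) :
    ∀ n : ℕ, ∀ s ∈ Set.Icc a t,
      iteratedDerivWithin n f (Set.Icc a t) s = iteratedDerivWithin n f (Set.Icc c t) s := by
  have hct : c < t := lt_of_le_of_lt hca hat
  have hsub : Set.Icc a t ⊆ Set.Icc c t := Set.Icc_subset_Icc hca le_rfl
  intro n
  induction n with
  | zero => simp
  | succ n ih =>
    intro s hs
    have hu : UniqueDiffWithinAt ℝ (Set.Icc a t) s := (uniqueDiffOn_Icc hat) s hs
    have hu' : UniqueDiffWithinAt ℝ (Set.Icc c t) s := (uniqueDiffOn_Icc hct) s (hsub hs)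
    rw [iteratedDerivWithin_succ, iteratedDerivWithin_succ]
    have hdiff : DifferentiableWithinAt ℝ (iteratedDerivWithin n f (Set.Icc c t))
        (Set.Icc c t) s :=
      ((hf.of_le (by exact_mod_cast le_top : ((n+1 : ℕ) : WithTop ℕ∞) ≤ ((⊤ : ℕ∞) : WithTop ℕ∞))).differentiableOn_iteratedDerivWithin
        (mod_cast n.lt_succ_self) (uniqueDiffOn_Icc hct)) s (hsub hs)
    have h1 := hdiff.hasDerivWithinAt
    have h2 := h1.mono hsub
    rw [derivWithin_congr (fun y hy => ih y hy) (ih s hs)]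
    exact h2.derivWithin hu

private lemma dc_aux_vanish {f : ℝ → ℝ} {a t : ℝ} (ht : 0 < t)
    (hf : ContDiffOn ℝ (⊤ : ℕ∞) f (Set.Icc 0 t)) (ha : a ∈ Set.Icc 0 t)
    (h00 : ∀ n : ℕ, iteratedDerivWithin n f (Set.Icc 0 t) 0 = 0)
    (hz : ∀ y ∈ Set.Icc (0:ℝ) a, f y = 0) :
    ∀ n : ℕ, ∀ s ∈ Set.Icc (0:ℝ) a, iteratedDerivWithin n f (Set.Icc 0 t) s = 0 := by
  rcases eq_or_lt_of_le ha.1 with h0a | h0a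
  · intro n s hs
    have hs0 : s = 0 := le_antisymm (hs.2.trans h0a.symm.le) hs.1
    rw [hs0]; exact h00 n
  · have hsub : Set.Icc (0:ℝ) a ⊆ Set.Icc 0 t := Set.Icc_subset_Icc le_rfl ha.2
    intro n
    induction n with
    | zero => intro s hs; simpa using hz s hs
    | succ n ih =>
      intro s hs
      have hu : UniqueDiffWithinAt ℝ (Set.Icc 0 t) s := (uniqueDiffOn_Icc ht) s (hsub hs)
      have hua : UniqueDiffWithinAt ℝ (Set.Icc (0:ℝ) a) s := (uniqueDiffOn_Icc h0a) s hs
      rw [iteratedDerivWithin_succ]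
      have hdiff : DifferentiableWithinAt ℝ (iteratedDerivWithin n f (Set.Icc 0 t))
          (Set.Icc 0 t) s :=
        ((hf.of_le (by exact_mod_cast le_top : ((n+1 : ℕ) : WithTop ℕ∞) ≤ ((⊤ : ℕ∞) : WithTop ℕ∞))).differentiableOn_iteratedDerivWithin
          (mod_cast n.lt_succ_self) (uniqueDiffOn_Icc ht)) s (hsub hs)
      have h1 := hdiff.hasDerivWithinAt.mono hsub
      have h2 : HasDerivWithinAt (iteratedDerivWithin n f (Set.Icc 0 t)) 0
          (Set.Icc (0:ℝ) a) s :=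
        (hasDerivWithinAt_const s _ (0:ℝ)).congr (fun y hy => ih y hy) (ih s hs)
      rw [← h1.derivWithin hua, h2.derivWithin hua]

theorem denjoy_carleman_identification (t : ℝ) (ht : 0 < t) (φ ψ : ℝ → ℝ)
    (hφ : ContDiffOn ℝ (⊤ : ℕ∞) φ (Set.Icc 0 t)) (hψ : ContDiffOn ℝ (⊤ : ℕ∞) ψ (Set.Icc 0 t))
    (A Abar C Cbar : ℝ) (hA : 0 < A) (hAbar : 0 < Abar) (hC : 0 < C) (hCbar : 0 < Cbar)
    (hφb : ∀ n : ℕ, ∀ s ∈ Set.Icc (0 : ℝ) t,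
      |iteratedDerivWithin n φ (Set.Icc 0 t) s| ≤ Cbar * Abar ^ n * (n : ℝ) ^ n)
    (hψb : ∀ n : ℕ, ∀ s ∈ Set.Icc (0 : ℝ) t,
      |iteratedDerivWithin n ψ (Set.Icc 0 t) s| ≤ C * A ^ n * (n : ℝ) ^ n)
    (h0 : ∀ n : ℕ,
      iteratedDerivWithin n φ (Set.Icc 0 t) 0 = iteratedDerivWithin n ψ (Set.Icc 0 t) 0) :
    Set.EqOn φ ψ (Set.Icc 0 t) := by
  set f : ℝ → ℝ := φ - ψ with hfdef
  have hf : ContDiffOn ℝ (⊤ : ℕ∞) f (Set.Icc 0 t) := hφ.sub hψ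
  set Bm : ℝ := max A Abar with hBmdef
  have hBm : 0 < Bm := lt_of_lt_of_le hA (le_max_left _ _)
  set K : ℝ := C + Cbar with hKdef
  have hK : 0 < K := add_pos hC hCbar
  have hud : UniqueDiffOn ℝ (Set.Icc (0:ℝ) t) := uniqueDiffOn_Icc ht
  -- bound on derivatives of f
  have hfb : ∀ n : ℕ, ∀ s ∈ Set.Icc (0:ℝ) t,
      |iteratedDerivWithin n f (Set.Icc 0 t) s| ≤ K * Bm ^ n * (n:ℝ) ^ n := by
    intro n s hs
    have hsplit : iteratedDerivWithin n f (Set.Icc 0 t) s =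
        iteratedDerivWithin n φ (Set.Icc 0 t) s - iteratedDerivWithin n ψ (Set.Icc 0 t) s :=
      iteratedDerivWithin_sub hs hud ((hφ s hs).of_le (by exact_mod_cast le_top)) ((hψ s hs).of_le (by exact_mod_cast le_top))
    rw [hsplit]
    have h1 := hφb n s hs
    have h2 := hψb n s hs
    have hA' : A ^ n ≤ Bm ^ n := pow_le_pow_left₀ hA.le (le_max_left _ _) n
    have hAb' : Abar ^ n ≤ Bm ^ n := pow_le_pow_left₀ hAbar.le (le_max_right _ _) n
    have hn : (0:ℝ) ≤ (n:ℝ) ^ n := by positivity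
    calc |iteratedDerivWithin n φ (Set.Icc 0 t) s - iteratedDerivWithin n ψ (Set.Icc 0 t) s|
        ≤ |iteratedDerivWithin n φ (Set.Icc 0 t) s| + |iteratedDerivWithin n ψ (Set.Icc 0 t) s| :=
          abs_sub _ _
      _ ≤ K * Bm ^ n * (n:ℝ) ^ n := by
          have e1 : C * A ^ n * (n:ℝ) ^ n ≤ C * Bm ^ n * (n:ℝ) ^ n := by
            have := mul_le_mul_of_nonneg_left hA' hC.le
            exact mul_le_mul_of_nonneg_right this hn
          have e2 : Cbar * Abar ^ n * (n:ℝ) ^ n ≤ Cbar * Bm ^ n * (n:ℝ) ^ n := by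
            have := mul_le_mul_of_nonneg_left hAb' hCbar.le
            exact mul_le_mul_of_nonneg_right this hn
          have e3 : K * Bm ^ n * (n:ℝ) ^ n = C * Bm ^ n * (n:ℝ) ^ n + Cbar * Bm ^ n * (n:ℝ) ^ n := by
            rw [hKdef]; ring
          linarith
  have h0f : ∀ n : ℕ, iteratedDerivWithin n f (Set.Icc 0 t) 0 = 0 := by
    intro n
    have h00 : (0:ℝ) ∈ Set.Icc (0:ℝ) t := ⟨le_rfl, ht.le⟩
    rw [iteratedDerivWithin_sub h00 hud ((hφ 0 h00).of_le (by exact_mod_cast le_top)) ((hψ 0 h00).of_le (by exact_mod_cast le_top)), h0 n, sub_self]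
  set E : ℝ := Real.exp 1 with hEdef
  have hE : 0 < E := Real.exp_pos 1
  set δ : ℝ := 1 / (2 * E * Bm) with hδdef
  have hδ : 0 < δ := by positivity
  -- key propagation step
  have key : ∀ a ∈ Set.Ico (0:ℝ) t, (∀ y ∈ Set.Icc (0:ℝ) a, f y = 0) →
      ∀ x ∈ Set.Icc a t, x ≤ a + δ → f x = 0 := by
    intro a ha hz x hx hxδ
    have haS : a ∈ Set.Icc (0:ℝ) t := ⟨ha.1, ha.2.le⟩
    have hsub : Set.Icc a t ⊆ Set.Icc (0:ℝ) t := Set.Icc_subset_Icc ha.1 le_rfl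
    have hderiv0 : ∀ n : ℕ, iteratedDerivWithin n f (Set.Icc a t) a = 0 := by
      intro n
      rw [dc_aux_restrict ha.1 ha.2 hf n a ⟨le_rfl, ha.2.le⟩]
      exact dc_aux_vanish ht hf haS h0f hz n a ⟨ha.1, le_rfl⟩
    -- Taylor bound for each n
    have hb : ∀ n : ℕ, |f x| ≤ K * (n+1) * (1/2 : ℝ) ^ (n+1) := by
      intro n
      have hfn : ContDiffOn ℝ ((n+1 : ℕ) : WithTop ℕ∞) f (Set.Icc a t) :=
        (hf.mono hsub).of_le (by exact_mod_cast le_top)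
      set M : ℝ := K * Bm ^ (n+1) * ((n+1 : ℕ) : ℝ) ^ (n+1) with hMdef
      have hCb : ∀ y ∈ Set.Icc a t, ‖iteratedDerivWithin (n+1) f (Set.Icc a t) y‖ ≤ M := by
        intro y hy
        rw [Real.norm_eq_abs, dc_aux_restrict ha.1 ha.2 hf (n+1) y hy]
        exact hfb (n+1) y (hsub hy)
      have htay := taylor_mean_remainder_bound ha.2.le hfn hx hCb
      have htay0 : taylorWithinEval f n (Set.Icc a t) a x = 0 := by
        rw [taylor_within_apply]
        exact Finset.sum_eq_zero fun k _ => by rw [hderiv0 k, smul_zero]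
      rw [htay0, sub_zero, Real.norm_eq_abs] at htay
      -- estimate (n+1)^(n+1) ≤ E^(n+1) * (n+1)!
      have hfact : ((n+1 : ℕ) : ℝ) ^ (n+1) ≤ E ^ (n+1) * (Nat.factorial (n+1) : ℝ) := by
        have hterm : ((n+1 : ℕ) : ℝ) ^ (n+1) / (Nat.factorial (n+1) : ℝ) ≤ E ^ (n+1) := by
          have hsum := Real.sum_le_exp_of_nonneg (x := ((n+1 : ℕ) : ℝ)) (by positivity) (n+2)
          have hone : ((n+1 : ℕ) : ℝ) ^ (n+1) / (Nat.factorial (n+1) : ℝ) ≤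
              ∑ i ∈ Finset.range (n+2), ((n+1 : ℕ) : ℝ) ^ i / (Nat.factorial i : ℝ) := by
            refine Finset.single_le_sum (f := fun i => ((n+1 : ℕ) : ℝ) ^ i / (Nat.factorial i : ℝ))
              (fun i _ => by positivity) (Finset.self_mem_range_succ (n+1))
          have hexp : Real.exp ((n+1 : ℕ) : ℝ) = E ^ (n+1) := by
            rw [hEdef, ← Real.exp_nat_mul]; norm_num
          calc ((n+1 : ℕ) : ℝ) ^ (n+1) / (Nat.factorial (n+1) : ℝ) ≤ _ := hone
            _ ≤ Real.exp ((n+1 : ℕ) : ℝ) := hsum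
            _ = E ^ (n+1) := hexp
        have hfp : (0:ℝ) < (Nat.factorial (n+1) : ℝ) := by positivity
        calc ((n+1 : ℕ) : ℝ) ^ (n+1)
            = ((n+1 : ℕ) : ℝ) ^ (n+1) / (Nat.factorial (n+1) : ℝ) * (Nat.factorial (n+1) : ℝ) := by
              field_simp
          _ ≤ E ^ (n+1) * (Nat.factorial (n+1) : ℝ) := by
              exact mul_le_mul_of_nonneg_right hterm hfp.le
      have hxa0 : (0:ℝ) ≤ x - a := sub_nonneg.2 hx.1
      have hhalf : E * Bm * (x - a) ≤ 1/2 := by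
        have : x - a ≤ δ := by linarith
        calc E * Bm * (x - a) ≤ E * Bm * δ := by
              exact mul_le_mul_of_nonneg_left this (by positivity)
          _ = 1/2 := by rw [hδdef]; field_simp
      have step1 : M * (x - a) ^ (n+1) / (Nat.factorial n : ℝ) ≤
          K * (n+1) * (E * Bm * (x - a)) ^ (n+1) := by
        rw [hMdef]
        have hfs : (Nat.factorial (n+1) : ℝ) = (n+1) * (Nat.factorial n : ℝ) := by
          rw [Nat.factorial_succ]; push_cast; ring
        have h1 : K * Bm ^ (n+1) * ((n+1 : ℕ) : ℝ) ^ (n+1) * (x - a) ^ (n+1) ≤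
            K * Bm ^ (n+1) * (E ^ (n+1) * (Nat.factorial (n+1) : ℝ)) * (x - a) ^ (n+1) := by
          have : (0:ℝ) ≤ (x - a) ^ (n+1) := by positivity
          have h2 : (0:ℝ) ≤ K * Bm ^ (n+1) := by positivity
          exact mul_le_mul_of_nonneg_right (mul_le_mul_of_nonneg_left hfact h2) this
        have hfp : (0:ℝ) < (Nat.factorial n : ℝ) := by positivity
        rw [div_le_iff₀ hfp]
        calc K * Bm ^ (n+1) * ((n+1 : ℕ) : ℝ) ^ (n+1) * (x - a) ^ (n+1)
            ≤ K * Bm ^ (n+1) * (E ^ (n+1) * (Nat.factorial (n+1) : ℝ)) * (x - a) ^ (n+1) := h1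
          _ = K * (n+1) * (E * Bm * (x - a)) ^ (n+1) * (Nat.factorial n : ℝ) := by
              rw [hfs, mul_pow, mul_pow]; push_cast; ring
      have step2 : K * (n+1) * (E * Bm * (x - a)) ^ (n+1) ≤ K * (n+1) * (1/2 : ℝ) ^ (n+1) := by
        have hp : (E * Bm * (x - a)) ^ (n+1) ≤ (1/2 : ℝ) ^ (n+1) :=
          pow_le_pow_left₀ (by positivity) hhalf (n+1)
        have : (0:ℝ) ≤ K * (n+1) := by positivity
        exact mul_le_mul_of_nonneg_left hp this
      exact htay.trans (step1.trans step2)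
    -- take the limit n → ∞
    have t1 : Tendsto (fun n : ℕ => (n:ℝ) * (1/2:ℝ) ^ n) atTop (nhds 0) := by
      simpa using (summable_pow_mul_geometric_of_norm_lt_one (R := ℝ) 1
        (r := (1/2:ℝ)) (by rw [Real.norm_eq_abs, abs_of_nonneg (by norm_num : (0:ℝ) ≤ 1/2)]; norm_num)).tendsto_atTop_zero
    have t2 : Tendsto (fun n : ℕ => ((1:ℝ)/2) ^ n) atTop (nhds 0) :=
      tendsto_pow_atTop_nhds_zero_of_lt_one (by norm_num) (by norm_num)
    have L : Tendsto (fun n : ℕ => K * (n+1) * (1/2:ℝ) ^ (n+1)) atTop (nhds 0) := by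
      have h := ((t1.add t2).const_mul (K/2))
      rw [add_zero, mul_zero] at h
      refine h.congr fun n => ?_
      rw [pow_succ]; ring
    have habs : |f x| ≤ 0 := ge_of_tendsto' L hb
    exact abs_nonpos_iff.mp habs
  -- main induction
  have main : ∀ k : ℕ, ∀ x ∈ Set.Icc (0:ℝ) t, x ≤ k * δ → f x = 0 := by
    intro k
    induction k with
    | zero =>
      intro x hx hxk
      have hx0 : x = 0 := le_antisymm (by simpa using hxk) hx.1
      rw [hx0]
      simpa using h0f 0
    | succ k ih =>
      intro x hx hxk
      rcases le_or_gt x (k * δ) with h | h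
      · exact ih x hx h
      · have hkt : (k:ℝ) * δ < t := lt_of_lt_of_le h hx.2
        have haI : (k:ℝ) * δ ∈ Set.Ico (0:ℝ) t := ⟨by positivity, hkt⟩
        have hz : ∀ y ∈ Set.Icc (0:ℝ) ((k:ℝ) * δ), f y = 0 :=
          fun y hy => ih y ⟨hy.1, hy.2.trans hkt.le⟩ hy.2
        refine key _ haI hz x ⟨h.le, hx.2⟩ ?_
        push_cast at hxk ⊢
        linarith
  intro s hs
  obtain ⟨k, hk⟩ := exists_nat_ge (t / δ)
  have hkδ : t ≤ k * δ := by
    rw [div_le_iff₀ hδ] at hk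
    linarith
  have := main k s hs (hs.2.trans hkδ)
  have : φ s - ψ s = 0 := this
  linarith
end

section
/- Let (L^Δ k)(η) be defined by (L^Δ k)(η) = ∑_{y∈η} ∫ a(x−y) e(τ_y; (η∖y)∪x) (Q_y k)((η∖y)∪x) dx − ∑_{x∈η} ∫ a(x−y) e(τ_y; η) (Q_y k)(η) dy, with a ≥ 0, ∫a = α, 0 ≤ τ_y ≤ 1, and |(Q_y k)(η)| ≤ ‖k‖_{ϑ''} e^{ϑ''|η|} exp(⟨φ⟩ e^{ϑ''}). Then |(L^Δ k)(η)| ≤ 2α·‖k‖_{ϑ''}·|η|·e^{ϑ''|η|}·exp(⟨φ⟩ e^{ϑ''}), and consequently for ϑ > ϑ'', ‖L^Δ k‖_ϑ := ess sup_η |(L^Δ k)(η)| e^{−ϑ|η|} ≤ (2α‖k‖_{ϑ''}/(e(ϑ−ϑ''))) · exp(⟨φ⟩ e^{ϑ''}). -/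
/-!
Each of the `2|η|` integrals is bounded by `α · ‖k‖_{ϑ''} e^{ϑ''|η|} exp(⟨φ⟩ e^{ϑ''})`: the
kernel integrates to `α`, `τ ≤ 1`, and the configuration `(η ∖ y) ∪ x` still has `|η|` points for
almost every `x`. Multiplying by `e^{-ϑ|η|}` leaves `|η| e^{-(ϑ-ϑ'')|η|} ≤ 1/(e(ϑ-ϑ''))`.
-/

open MeasureTheory

theorem Real.mul_exp_neg_mul_le {σ : ℝ} (hσ : 0 < σ) (x : ℝ) :
    x * Real.exp (-(σ * x)) ≤ 1 / (Real.exp 1 * σ) := by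
  have key : σ * x * Real.exp 1 ≤ Real.exp (σ * x) := by
    have h := Real.add_one_le_exp (σ * x - 1)
    rw [Real.exp_sub] at h
    rwa [le_div_iff₀ (Real.exp_pos 1), sub_add_cancel] at h
  rw [Real.exp_neg, ← div_eq_mul_inv, div_le_div_iff₀ (Real.exp_pos _) (by positivity)]
  linarith

theorem ciSup_abs_mul_exp_neg_card_le {ι : Type*} {f : Finset ι → ℝ} {c ϑ'' ϑ : ℝ}
    (hc : 0 ≤ c) (hϑ : ϑ'' < ϑ)
    (hf : ∀ η : Finset ι, |f η| ≤ c * η.card * Real.exp (ϑ'' * η.card)) :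
    (⨆ η : Finset ι, |f η| * Real.exp (-(ϑ * η.card))) ≤ c / (Real.exp 1 * (ϑ - ϑ'')) := by
  refine ciSup_le fun η => ?_
  calc |f η| * Real.exp (-(ϑ * η.card))
      ≤ c * η.card * Real.exp (ϑ'' * η.card) * Real.exp (-(ϑ * η.card)) := by
        gcongr
        exact hf η
    _ = c * (η.card * Real.exp (-((ϑ - ϑ'') * η.card))) := by
        rw [mul_assoc, ← Real.exp_add]
        ring_nf
    _ ≤ c * (1 / (Real.exp 1 * (ϑ - ϑ''))) := by
        gcongr
        exact Real.mul_exp_neg_mul_le (sub_pos.2 hϑ) _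
    _ = c / (Real.exp 1 * (ϑ - ϑ'')) := mul_one_div _ _

theorem abs_sum_le_card_mul {ι : Type*} {s : Finset ι} {f : ι → ℝ} {B : ℝ}
    (h : ∀ i ∈ s, |f i| ≤ B) : |∑ i ∈ s, f i| ≤ s.card * B :=
  (Finset.abs_sum_le_sum_abs f s).trans <| by
    simpa only [nsmul_eq_mul] using Finset.sum_le_card_nsmul s _ B h

theorem abs_integral_mul_mul_le {X : Type*} [MeasurableSpace X] {μ : Measure X}
    {k t q : X → ℝ} {C : ℝ} (hk : Integrable k μ) (hk0 : ∀ x, 0 ≤ k x)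
    (ht : ∀ x, 0 ≤ t x ∧ t x ≤ 1) (hq : ∀ᵐ x ∂μ, |q x| ≤ C) :
    |∫ x, k x * t x * q x ∂μ| ≤ (∫ x, k x ∂μ) * C := by
  rw [← Real.norm_eq_abs, ← integral_mul_const C k]
  refine norm_integral_le_of_norm_le (hk.mul_const C) ?_
  filter_upwards [hq] with x hqx
  obtain ⟨ht0, ht1⟩ := ht x
  rw [Real.norm_eq_abs, abs_mul, abs_mul, abs_of_nonneg (hk0 x), abs_of_nonneg ht0]
  have hk0x := hk0 x
  calc k x * t x * |q x| ≤ k x * 1 * C := by gcongr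
    _ = k x * C := by rw [mul_one]

theorem ae_notMem_erase {ι : Type*} [Fintype ι] (s : Finset (ι → ℝ)) (y : ι → ℝ) :
    ∀ᵐ x : ι → ℝ, x ∉ s.erase y := by
  cases isEmpty_or_nonempty ι
  · exact .of_forall fun x => Subsingleton.elim x y ▸ Finset.notMem_erase y s
  · exact (s.erase y).countable_toSet.ae_notMem volume

theorem Finset.card_insert_erase_of_notMem {α : Type*} [DecidableEq α] {s : Finset α} {x y : α}
    (hy : y ∈ s) (hx : x ∉ s.erase y) : (insert x (s.erase y)).card = s.card := by
  rw [Finset.card_insert_of_notMem hx, Finset.card_erase_add_one hy]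

theorem LDelta_bound_general {d : ℕ} (a : (Fin d → ℝ) → ℝ) (ha : ∀ x, 0 ≤ a x)
    (hint : Integrable a) (α : ℝ) (hα : ∫ x, a x = α)
    (τ : (Fin d → ℝ) → Finset (Fin d → ℝ) → ℝ)
    (hτ : ∀ y η, 0 ≤ τ y η ∧ τ y η ≤ 1)
    (Q : (Fin d → ℝ) → Finset (Fin d → ℝ) → ℝ)
    (nk ϑ'' phibar : ℝ)
    (hQ : ∀ (y : Fin d → ℝ) (η : Finset (Fin d → ℝ)),
      |Q y η| ≤ nk * Real.exp (ϑ'' * η.card) * Real.exp (phibar * Real.exp ϑ''))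
    (Lk : Finset (Fin d → ℝ) → ℝ)
    (hLk : ∀ η : Finset (Fin d → ℝ), Lk η =
      (∑ y ∈ η, ∫ x, a (x - y) * τ y (insert x (η.erase y)) * Q y (insert x (η.erase y)))
      - ∑ x ∈ η, ∫ y, a (x - y) * τ y η * Q y η) :
    (∀ η : Finset (Fin d → ℝ),
      |Lk η| ≤ 2 * α * nk * η.card * Real.exp (ϑ'' * η.card) *
        Real.exp (phibar * Real.exp ϑ'')) ∧
    (∀ ϑ : ℝ, ϑ'' < ϑ →
      (⨆ η : Finset (Fin d → ℝ), |Lk η| * Real.exp (-(ϑ * η.card)))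
        ≤ (2 * α * nk / (Real.exp 1 * (ϑ - ϑ''))) * Real.exp (phibar * Real.exp ϑ'')) := by
  set E := Real.exp (phibar * Real.exp ϑ'')
  have hα0 : 0 ≤ α := hα ▸ integral_nonneg ha
  have hnk0 : 0 ≤ nk := by
    have h := (abs_nonneg _).trans (hQ 0 ∅)
    simp only [Finset.card_empty, Nat.cast_zero, mul_zero, Real.exp_zero, mul_one] at h
    exact nonneg_of_mul_nonneg_left h (Real.exp_pos _)
  have pointwise (η : Finset (Fin d → ℝ)) :
      |Lk η| ≤ 2 * α * nk * η.card * Real.exp (ϑ'' * η.card) * E := by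
    have hgain (y) (hy : y ∈ η) :
        |∫ x, a (x - y) * τ y (insert x (η.erase y)) * Q y (insert x (η.erase y))|
          ≤ α * (nk * Real.exp (ϑ'' * η.card) * E) := by
      rw [← hα, ← integral_sub_right_eq_self a y]
      refine abs_integral_mul_mul_le (hint.comp_sub_right y) (fun _ => ha _) (fun _ => hτ _ _) ?_
      filter_upwards [ae_notMem_erase η y] with x hx
      simpa only [Finset.card_insert_erase_of_notMem hy hx] using hQ y (insert x (η.erase y))
    have hloss (x) : |∫ y, a (x - y) * τ y η * Q y η|
        ≤ α * (nk * Real.exp (ϑ'' * η.card) * E) := by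
      rw [← hα, ← integral_sub_left_eq_self a volume x]
      exact abs_integral_mul_mul_le (by simpa using hint.comp_sub_left x) (fun _ => ha _)
        (fun _ => hτ _ _) (.of_forall fun y => hQ y η)
    calc |Lk η| ≤ η.card * (α * (nk * Real.exp (ϑ'' * η.card) * E))
          + η.card * (α * (nk * Real.exp (ϑ'' * η.card) * E)) := by
          rw [hLk η]
          exact (abs_sub _ _).trans (add_le_add (abs_sum_le_card_mul hgain)
            (abs_sum_le_card_mul fun x _ => hloss x))
      _ = 2 * α * nk * η.card * Real.exp (ϑ'' * η.card) * E := by ring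
  refine ⟨pointwise, fun ϑ hϑ => ?_⟩
  rw [div_mul_eq_mul_div, mul_right_comm]
  refine ciSup_abs_mul_exp_neg_card_le (by positivity) hϑ fun η => ?_
  linarith [pointwise η]

theorem LDelta_bound {d : ℕ} (a : (Fin d → ℝ) → ℝ) (ha : ∀ x, 0 ≤ a x)
    (hint : Integrable a) (α : ℝ) (hα : ∫ x, a x = α)
    (τ : (Fin d → ℝ) → Finset (Fin d → ℝ) → ℝ)
    (hτ : ∀ y η, 0 ≤ τ y η ∧ τ y η ≤ 1)
    (Q : (Fin d → ℝ) → Finset (Fin d → ℝ) → ℝ)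
    (nk ϑ'' phibar : ℝ) (hphibar : 0 ≤ phibar)
    (hQ : ∀ (y : Fin d → ℝ) (η : Finset (Fin d → ℝ)),
      |Q y η| ≤ nk * Real.exp (ϑ'' * η.card) * Real.exp (phibar * Real.exp ϑ''))
    (Lk : Finset (Fin d → ℝ) → ℝ)
    (hLk : ∀ η : Finset (Fin d → ℝ), Lk η =
      (∑ y ∈ η, ∫ x, a (x - y) * τ y (insert x (η.erase y)) * Q y (insert x (η.erase y)))
      - ∑ x ∈ η, ∫ y, a (x - y) * τ y η * Q y η) :
    (∀ η : Finset (Fin d → ℝ),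
      |Lk η| ≤ 2 * α * nk * η.card * Real.exp (ϑ'' * η.card) *
        Real.exp (phibar * Real.exp ϑ'')) ∧
    (∀ ϑ : ℝ, ϑ'' < ϑ →
      (⨆ η : Finset (Fin d → ℝ), |Lk η| * Real.exp (-(ϑ * η.card)))
        ≤ (2 * α * nk / (Real.exp 1 * (ϑ - ϑ''))) * Real.exp (phibar * Real.exp ϑ'')) :=
  LDelta_bound_general a ha hint α hα τ hτ Q nk ϑ'' phibar hQ Lk hLk
end
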